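/- Let K ≥ 4 be an integer, β = 1/(1+K²), c₀ = 1 − β, and let u₂₀₀(x) = −1/(2c₀) − cos(2x)/(2(c₀ − 4 + 16β)), u₁₁₀(x) = −cos((K−1)x)/(c₀ − (K−1)² + β(K−1)⁴) − cos((K+1)x)/(c₀ − (K+1)² + β(K+1)⁴), u₀₂₀(x) = −1/(2c₀) − cos(2Kx)/(2(c₀ − 4K² + 16βK⁴)). Then for all a, b ∈ ℝ: (1/π)∫_{−π}^{π} 2(a·cos(x) + b·cos(Kx))·(a²·u₂₀₀(x) + ab·u₁₁₀(x) + b²·u₀₂₀(x))·cos(x) dx = v₃₀₀(K)·a³ + v₁₂₀(K)·ab², and (1/π)∫_{−π}^{π} 2(a·cos(x) + b·cos(Kx))·(a²·u₂₀₀(x) + ab·u₁₁₀(x) + b²·u₀₂₀(x))·cos(Kx) dx = w₂₁₀(K)·a²b + w₀₃₀(K)·b³, where v₃₀₀(K) = −(K²+1)(5K²−24)/(6K²(K²−4)), v₁₂₀(K) = w₂₁₀(K) = −(K²+1)(4K⁴−27K²+4)/(K²(K²−4)(4K²−1)), and w₀₃₀(K) = −(K²+1)(24K²−5)/(6K²(4K²−1)).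 -/

import Mathlib

/-!
With `β = 1/(1+K²)` and `c₀ = 1 - β` the Kawahara dispersion symbol `c₀ - n² + β n⁴` factors as
`(n² - 1)(n² - K²)/(1 + K²)`: it vanishes exactly at the resonant wavenumbers `1` and `K`, and
its values at the other wavenumbers `0, 2, K ± 1, 2K` occurring in `u₂₀₀, u₁₁₀, u₀₂₀` are explicit.
The integrands are sums of triple products `cos (l x) cos (m x) cos (n x)`, whose integral over a
period is `π/2` times the number of sign choices with `l ± m ± n = 0`. For `K ≥ 4` such a
combination of the frequencies involved vanishes only when it vanishes identically in `K`, so each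
projection is a short linear combination of the coefficients of the `u`'s, and the stated rational
functions follow by clearing denominators.
-/

open Real intervalIntegral

theorem integral_cos_int_mul (n : ℤ) :
    ∫ x in -π..π, cos (n * x) = if n = 0 then 2 * π else 0 := by
  split_ifs with hn
  · simp [hn, two_mul]
  · have hn' : (n : ℝ) ≠ 0 := Int.cast_ne_zero.mpr hn
    rw [integral_comp_mul_left (fun x => cos x) hn', integral_cos, mul_neg, sin_neg,
      sin_int_mul_pi]
    simp

theorem integral_cos_mul_cos_mul_cos (l m n : ℤ) :
    ∫ x in -π..π, cos (l * x) * cos (m * x) * cos (n * x) =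
      π / 2 * ((if l + m + n = 0 then 1 else 0) + (if l + m - n = 0 then 1 else 0)
        + (if l - m + n = 0 then 1 else 0) + (if l - m - n = 0 then 1 else 0)) := by
  have product_to_sum : ∀ x : ℝ, cos (l * x) * cos (m * x) * cos (n * x) =
      (cos ((l + m + n : ℤ) * x) + cos ((l + m - n : ℤ) * x)
        + cos ((l - m + n : ℤ) * x) + cos ((l - m - n : ℤ) * x)) / 4 := by
    intro x
    push_cast
    simp only [add_mul, sub_mul, cos_add, cos_sub, sin_add, sin_sub]
    ring
  have hint (k : ℤ) : IntervalIntegrable (fun x => cos (k * x)) MeasureTheory.volume (-π) π := by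
    apply Continuous.intervalIntegrable; fun_prop
  simp only [product_to_sum]
  rw [integral_div, integral_add (((hint _).add (hint _)).add (hint _)) (hint _),
    integral_add ((hint _).add (hint _)) (hint _), integral_add (hint _) (hint _)]
  simp only [integral_cos_int_mul]
  split_ifs <;> ring

theorem integral_sum_cos_mul_sum_cos_mul_cos {ι κ : Type*} (s : Finset ι) (t : Finset κ)
    (α : ι → ℝ) (j : ι → ℤ) (γ : κ → ℝ) (m : κ → ℤ) (n : ℤ) :
    ∫ x in -π..π, (∑ i ∈ s, α i * cos (j i * x)) * (∑ k ∈ t, γ k * cos (m k * x)) * cos (n * x)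
      = ∑ i ∈ s, ∑ k ∈ t,
          α i * γ k * ∫ x in -π..π, cos (j i * x) * cos (m k * x) * cos (n * x) := by
  have expand (x : ℝ) :
      (∑ i ∈ s, α i * cos (j i * x)) * (∑ k ∈ t, γ k * cos (m k * x)) * cos (n * x)
        = ∑ i ∈ s, ∑ k ∈ t, α i * γ k * (cos (j i * x) * cos (m k * x) * cos (n * x)) := by
    rw [Finset.sum_mul_sum, Finset.sum_mul]
    refine Finset.sum_congr rfl fun i _ => ?_
    rw [Finset.sum_mul]
    exact Finset.sum_congr rfl fun k _ => by ring
  simp only [expand]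
  rw [integral_finsetSum fun i _ => by apply Continuous.intervalIntegrable; fun_prop]
  refine Finset.sum_congr rfl fun i _ => ?_
  rw [integral_finsetSum fun k _ => by apply Continuous.intervalIntegrable; fun_prop]
  simp only [integral_const_mul]

theorem integral_wilton_cubic_mul_cos (K : ℕ) (u200 u110 u020 : ℝ → ℝ) (p₀ p₂ q r s₀ s : ℝ)
    (hu200 : ∀ x, u200 x = p₀ + p₂ * cos (2 * x))
    (hu110 : ∀ x, u110 x = q * cos ((K - 1) * x) + r * cos ((K + 1) * x))
    (hu020 : ∀ x, u020 x = s₀ + s * cos (2 * K * x)) (a b : ℝ) (n : ℤ) :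
    ∫ x in -π..π, 2 * (a * cos x + b * cos (K * x))
        * (a ^ 2 * u200 x + a * b * u110 x + b ^ 2 * u020 x) * cos (n * x)
      = 2 * ∑ i : Fin 2, ∑ k : Fin 6,
          ![a, b] i * ![a ^ 2 * p₀, a ^ 2 * p₂, a * b * q, a * b * r, b ^ 2 * s₀, b ^ 2 * s] k
            * ∫ x in -π..π, cos ((![1, (K : ℤ)] i : ℤ) * x)
                * cos ((![0, 2, (K : ℤ) - 1, K + 1, 0, 2 * K] k : ℤ) * x) * cos (n * x) := by
  rw [← integral_sum_cos_mul_sum_cos_mul_cos, ← integral_const_mul]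
  congr 1 with x
  simp only [Fin.sum_univ_succ, Fin.sum_univ_zero, hu200, hu110, hu020, Fin.isValue,
    Matrix.cons_val_zero, Matrix.cons_val_one, Matrix.cons_val, Fin.succ_zero_eq_one,
    Fin.succ_one_eq_two, Fin.reduceSucc, Matrix.cons_val_fin_one]
  push_cast
  simp only [one_mul, zero_mul, cos_zero]
  ring

theorem cosine_projections_of_wilton_cubic (K : ℕ) (hK : 4 ≤ K) (u200 u110 u020 : ℝ → ℝ)
    (p₀ p₂ q r s₀ s : ℝ)
    (hu200 : ∀ x, u200 x = p₀ + p₂ * cos (2 * x))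
    (hu110 : ∀ x, u110 x = q * cos ((K - 1) * x) + r * cos ((K + 1) * x))
    (hu020 : ∀ x, u020 x = s₀ + s * cos (2 * K * x)) (a b : ℝ) :
    (1 / π) * (∫ x in -π..π, 2 * (a * cos x + b * cos (K * x))
        * (a ^ 2 * u200 x + a * b * u110 x + b ^ 2 * u020 x) * cos x)
      = (2 * p₀ + p₂) * a ^ 3 + (2 * s₀ + q + r) * a * b ^ 2 ∧
    (1 / π) * (∫ x in -π..π, 2 * (a * cos x + b * cos (K * x))
        * (a ^ 2 * u200 x + a * b * u110 x + b ^ 2 * u020 x) * cos (K * x))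
      = (2 * p₀ + q + r) * a ^ 2 * b + (2 * s₀ + s) * b ^ 3 := by
  have hK_int : (4 : ℤ) ≤ K := by exact_mod_cast hK
  have h₁ := integral_wilton_cubic_mul_cos K u200 u110 u020 p₀ p₂ q r s₀ s hu200 hu110 hu020 a b 1
  have h_K := integral_wilton_cubic_mul_cos K u200 u110 u020 p₀ p₂ q r s₀ s hu200 hu110 hu020 a b K
  simp only [Fin.sum_univ_succ, Fin.sum_univ_zero, Fin.isValue,
    Matrix.cons_val_zero, Matrix.cons_val_one, Matrix.cons_val, Fin.succ_zero_eq_one,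
    Fin.succ_one_eq_two, Fin.reduceSucc, Matrix.cons_val_fin_one] at h₁ h_K
  simp only [integral_cos_mul_cos_mul_cos] at h₁ h_K
  -- the matrix entries must be reduced first: otherwise the `Decidable` instances of the
  -- conditions still mention them and `if_pos` / `if_neg` do not match
  simp (disch := omega) only [if_pos, if_neg] at h₁ h_K
  simp only [Int.cast_one, one_mul] at h₁
  simp only [Int.cast_natCast] at h_K
  constructor
  · rw [h₁]; field_simp; ring
  · rw [h_K]; field_simp; ring

def kawaharaSymbol (β c₀ n : ℝ) : ℝ := c₀ - n ^ 2 + β * n ^ 4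

theorem kawaharaSymbol_wilton {K β c₀ : ℝ} (hβ : β = 1 / (1 + K ^ 2)) (hc₀ : c₀ = 1 - β)
    (n : ℝ) : kawaharaSymbol β c₀ n = (n ^ 2 - 1) * (n ^ 2 - K ^ 2) / (1 + K ^ 2) := by
  subst hc₀ hβ
  unfold kawaharaSymbol
  field_simp
  ring

theorem wilton_v300 {K β c₀ : ℝ} (hβ : β = 1 / (1 + K ^ 2)) (hc₀ : c₀ = 1 - β)
    (hK₀ : K ≠ 0) (hK₂ : K ^ 2 ≠ 4) :
    2 * (-1 / (2 * kawaharaSymbol β c₀ 0)) + -1 / (2 * kawaharaSymbol β c₀ 2)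
      = -((K ^ 2 + 1) * (5 * K ^ 2 - 24)) / (6 * K ^ 2 * (K ^ 2 - 4)) := by
  have : K ^ 2 - 4 ≠ 0 := sub_ne_zero.mpr hK₂
  have h₀ : ((0 : ℝ) ^ 2 - 1) * (0 ^ 2 - K ^ 2) = K ^ 2 := by ring
  have h₂ : ((2 : ℝ) ^ 2 - 1) * (2 ^ 2 - K ^ 2) = -3 * (K ^ 2 - 4) := by ring
  simp only [kawaharaSymbol_wilton hβ hc₀, h₀, h₂]
  field_simp
  ring

theorem wilton_v120 {K β c₀ : ℝ} (hβ : β = 1 / (1 + K ^ 2)) (hc₀ : c₀ = 1 - β)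
    (hK₀ : K ≠ 0) (hK₂ : K ^ 2 ≠ 4) (hK₁ : 4 * K ^ 2 ≠ 1) :
    2 * (-1 / (2 * kawaharaSymbol β c₀ 0)) + -1 / kawaharaSymbol β c₀ (K - 1)
        + -1 / kawaharaSymbol β c₀ (K + 1)
      = -((K ^ 2 + 1) * (4 * K ^ 4 - 27 * K ^ 2 + 4))
          / (K ^ 2 * (K ^ 2 - 4) * (4 * K ^ 2 - 1)) := by
  have : K - 2 ≠ 0 := fun h => hK₂ (by rw [sub_eq_zero.mp h]; norm_num)
  have : K + 2 ≠ 0 := fun h => hK₂ (by rw [eq_neg_of_add_eq_zero_left h]; norm_num)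
  have : 2 * K - 1 ≠ 0 := fun h => hK₁ (by linear_combination (2 * K + 1) * h)
  have : 2 * K + 1 ≠ 0 := fun h => hK₁ (by linear_combination (2 * K - 1) * h)
  have e₂ : K ^ 2 - 4 = (K - 2) * (K + 2) := by ring
  have e₁ : 4 * K ^ 2 - 1 = (2 * K - 1) * (2 * K + 1) := by ring
  have h₀ : ((0 : ℝ) ^ 2 - 1) * (0 ^ 2 - K ^ 2) = K ^ 2 := by ring
  have hm : ((K - 1) ^ 2 - 1) * ((K - 1) ^ 2 - K ^ 2) = -(K * (K - 2) * (2 * K - 1)) := by ring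
  have hp : ((K + 1) ^ 2 - 1) * ((K + 1) ^ 2 - K ^ 2) = K * (K + 2) * (2 * K + 1) := by ring
  simp only [kawaharaSymbol_wilton hβ hc₀, h₀, hm, hp, e₁, e₂]
  field_simp
  ring

theorem wilton_w030 {K β c₀ : ℝ} (hβ : β = 1 / (1 + K ^ 2)) (hc₀ : c₀ = 1 - β)
    (hK₀ : K ≠ 0) (hK₁ : 4 * K ^ 2 ≠ 1) :
    2 * (-1 / (2 * kawaharaSymbol β c₀ 0)) + -1 / (2 * kawaharaSymbol β c₀ (2 * K))
      = -((K ^ 2 + 1) * (24 * K ^ 2 - 5)) / (6 * K ^ 2 * (4 * K ^ 2 - 1)) := by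
  have : 2 * K - 1 ≠ 0 := fun h => hK₁ (by linear_combination (2 * K + 1) * h)
  have : 2 * K + 1 ≠ 0 := fun h => hK₁ (by linear_combination (2 * K - 1) * h)
  have e₁ : 4 * K ^ 2 - 1 = (2 * K - 1) * (2 * K + 1) := by ring
  have h₀ : ((0 : ℝ) ^ 2 - 1) * (0 ^ 2 - K ^ 2) = K ^ 2 := by ring
  have h₂ : ((2 * K) ^ 2 - 1) * ((2 * K) ^ 2 - K ^ 2) = 3 * K ^ 2 * (4 * K ^ 2 - 1) := by ring
  simp only [kawaharaSymbol_wilton hβ hc₀, h₀, h₂, e₁]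
  field_simp
  ring

/-- The cubic terms of the Lyapunov–Schmidt bifurcation equation for the Kawahara Wilton
ripples with K ≥ 4 (β = 1/(1+K²), c₀ = 1 − β). -/
theorem kawahara_cubic_terms_K_ge_4 (K : ℕ) (hK : 4 ≤ K) (β c₀ : ℝ)
    (hβ : β = 1 / (1 + (K : ℝ) ^ 2)) (hc₀ : c₀ = 1 - β)
    (u200 u110 u020 : ℝ → ℝ)
    (hu200 : ∀ x : ℝ, u200 x =
      -1 / (2 * c₀) - Real.cos (2 * x) / (2 * (c₀ - 4 + 16 * β)))
    (hu110 : ∀ x : ℝ, u110 x =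
      -Real.cos (((K : ℝ) - 1) * x) / (c₀ - ((K : ℝ) - 1) ^ 2 + β * ((K : ℝ) - 1) ^ 4)
      - Real.cos (((K : ℝ) + 1) * x) / (c₀ - ((K : ℝ) + 1) ^ 2 + β * ((K : ℝ) + 1) ^ 4))
    (hu020 : ∀ x : ℝ, u020 x =
      -1 / (2 * c₀) - Real.cos (2 * (K : ℝ) * x)
        / (2 * (c₀ - 4 * (K : ℝ) ^ 2 + 16 * β * (K : ℝ) ^ 4)))
    (v300 v120 w210 w030 : ℝ)
    (hv300 : v300 = -(((K : ℝ) ^ 2 + 1) * (5 * (K : ℝ) ^ 2 - 24))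
      / (6 * (K : ℝ) ^ 2 * ((K : ℝ) ^ 2 - 4)))
    (hv120 : v120 = -(((K : ℝ) ^ 2 + 1) * (4 * (K : ℝ) ^ 4 - 27 * (K : ℝ) ^ 2 + 4))
      / ((K : ℝ) ^ 2 * ((K : ℝ) ^ 2 - 4) * (4 * (K : ℝ) ^ 2 - 1)))
    (hw210 : w210 = v120)
    (hw030 : w030 = -(((K : ℝ) ^ 2 + 1) * (24 * (K : ℝ) ^ 2 - 5))
      / (6 * (K : ℝ) ^ 2 * (4 * (K : ℝ) ^ 2 - 1))) :
    ∀ a b : ℝ,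
      (1 / Real.pi) * (∫ x in (-Real.pi)..Real.pi,
          2 * (a * Real.cos x + b * Real.cos ((K : ℝ) * x))
            * (a ^ 2 * u200 x + a * b * u110 x + b ^ 2 * u020 x) * Real.cos x)
        = v300 * a ^ 3 + v120 * a * b ^ 2 ∧
      (1 / Real.pi) * (∫ x in (-Real.pi)..Real.pi,
          2 * (a * Real.cos x + b * Real.cos ((K : ℝ) * x))
            * (a ^ 2 * u200 x + a * b * u110 x + b ^ 2 * u020 x) * Real.cos ((K : ℝ) * x))
        = w210 * a ^ 2 * b + w030 * b ^ 3 := by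
  intro a b
  subst hv300 hv120 hw210 hw030
  have hK' : (4 : ℝ) ≤ K := by exact_mod_cast hK
  have hK₀ : (K : ℝ) ≠ 0 := (by linarith : (0 : ℝ) < K).ne'
  have hK₂ : (K : ℝ) ^ 2 ≠ 4 := (by nlinarith : (4 : ℝ) < K ^ 2).ne'
  have hK₁ : 4 * (K : ℝ) ^ 2 ≠ 1 := (by nlinarith : (1 : ℝ) < 4 * K ^ 2).ne'
  obtain ⟨h₁, h_K⟩ := cosine_projections_of_wilton_cubic K hK u200 u110 u020
    (-1 / (2 * kawaharaSymbol β c₀ 0)) (-1 / (2 * kawaharaSymbol β c₀ 2))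
    (-1 / kawaharaSymbol β c₀ (K - 1)) (-1 / kawaharaSymbol β c₀ (K + 1))
    (-1 / (2 * kawaharaSymbol β c₀ 0)) (-1 / (2 * kawaharaSymbol β c₀ (2 * K)))
    (fun x => by rw [hu200]; unfold kawaharaSymbol; ring)
    (fun x => by rw [hu110]; unfold kawaharaSymbol; ring)
    (fun x => by rw [hu020]; unfold kawaharaSymbol; ring) a b
  rw [h₁, h_K, wilton_v300 hβ hc₀ hK₀ hK₂, wilton_v120 hβ hc₀ hK₀ hK₂ hK₁,
    wilton_w030 hβ hc₀ hK₀ hK₁]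
  exact ⟨rfl, rfl⟩
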